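/- arXiv:1112.0058 — 2 statements merged into one kernel-verified Lean document; each statement's English description precedes it below -/
import Mathlib

section
/- Let $h \ge 1$ and let $d_1, \ldots, d_h$ be nonnegative real numbers. Let $R$ be a real number with $R > \sum_{i=1}^h d_i + \frac{\prod_{i=1}^h d_i}{(h-1)!}$ and $R > 0$. Then $\prod_{i=1}^h (R - d_i) > \frac{\prod_{i=1}^h d_i}{(h-1)!} \cdot R^{h-1}$. -/
/-!
Expanding `∏ (R - dᵢ)` gives `R^h - σ₁ R^(h-1) + …`, and the Weierstrass product inequality
`∏ (R - dᵢ) ≥ R^(h-1) (R - σ₁)` (for `0 ≤ dᵢ ≤ R`) says the tail of that expansion is nonnegative.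
Since `R - σ₁` exceeds `∏ dᵢ / (h-1)!`, the claim follows.
-/

open Finset

section Weierstrass

variable {ι α : Type*} [CommRing α] [LinearOrder α] [IsStrictOrderedRing α]

/-- The Weierstrass product inequality `1 - ∑ xᵢ ≤ ∏ (1 - xᵢ)`, made homogeneous in `R`
and multiplied by `R` so that no `#s - 1` exponent appears. -/
theorem pow_card_mul_sub_sum_le_mul_prod_sub (s : Finset ι) (d : ι → α) (R : α)
    (hd : ∀ i ∈ s, 0 ≤ d i) (hdR : ∀ i ∈ s, d i ≤ R) :
    R ^ #s * (R - ∑ i ∈ s, d i) ≤ R * ∏ i ∈ s, (R - d i) := by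
  classical
  induction s using Finset.induction_on with
  | empty => simp
  | insert a s ha ih =>
    have hda := hd a (mem_insert_self a s)
    have hRa : 0 ≤ R - d a := sub_nonneg.2 (hdR a (mem_insert_self a s))
    have hR : 0 ≤ R := hda.trans (hdR a (mem_insert_self a s))
    have hS : 0 ≤ ∑ i ∈ s, d i := sum_nonneg fun i hi => hd i (mem_insert_of_mem hi)
    have ih := ih (fun i hi => hd i (mem_insert_of_mem hi))
      (fun i hi => hdR i (mem_insert_of_mem hi))
    rw [card_insert_of_notMem ha, sum_insert ha, prod_insert ha]
    calc R ^ (#s + 1) * (R - (d a + ∑ i ∈ s, d i))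
        ≤ R ^ #s * (R - ∑ i ∈ s, d i) * (R - d a) := by
          have hexpand : R ^ #s * (R - ∑ i ∈ s, d i) * (R - d a) =
              R ^ (#s + 1) * (R - (d a + ∑ i ∈ s, d i)) + R ^ #s * (d a * ∑ i ∈ s, d i) := by
            ring
          linarith [mul_nonneg (pow_nonneg hR #s) (mul_nonneg hda hS)]
      _ ≤ (R * ∏ i ∈ s, (R - d i)) * (R - d a) := mul_le_mul_of_nonneg_right ih hRa
      _ = R * ((R - d a) * ∏ i ∈ s, (R - d i)) := by ring

end Weierstrass

theorem stmt_3_general (h : ℕ) (hh : 1 ≤ h) (d : Fin h → ℝ) (hd : ∀ i, 0 ≤ d i)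
    (R : ℝ)
    (hR : R > (∑ i, d i) + (∏ i, d i) / (h - 1).factorial) :
    ∏ i, (R - d i) > (∏ i, d i) / (h - 1).factorial * R ^ (h - 1) := by
  set c := (∏ i, d i) / (h - 1).factorial
  have hc : 0 ≤ c := div_nonneg (prod_nonneg fun i _ => hd i) (Nat.cast_nonneg _)
  have hS : 0 ≤ ∑ i, d i := sum_nonneg fun i _ => hd i
  have hR0 : 0 < R := by linarith
  have hdR : ∀ i ∈ univ, d i ≤ R := fun i _ =>
    (single_le_sum (fun j _ => hd j) (mem_univ i)).trans (by linarith)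
  have key := pow_card_mul_sub_sum_le_mul_prod_sub univ d R (fun i _ => hd i) hdR
  rw [card_univ, Fintype.card_fin, ← pow_sub_one_mul (by omega), mul_right_comm,
    mul_comm R] at key
  calc c * R ^ (h - 1)
      < R ^ (h - 1) * (R - ∑ i, d i) := by nlinarith [pow_pos hR0 (h - 1)]
    _ ≤ ∏ i, (R - d i) := le_of_mul_le_mul_right key hR0

theorem stmt_3 (h : ℕ) (hh : 1 ≤ h) (d : Fin h → ℝ) (hd : ∀ i, 0 ≤ d i)
    (R : ℝ) (hR0 : 0 < R)
    (hR : R > (∑ i, d i) + (∏ i, d i) / (h - 1).factorial) :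
    ∏ i, (R - d i) > (∏ i, d i) / (h - 1).factorial * R ^ (h - 1) :=
  stmt_3_general h hh d hd R hR
end

section
/- Let $h \ge 1$, let $t_1, \ldots, t_h$ be positive integers, let $s$ be an integer with $s > h$, and let $r$ be an integer with $r > \sum_{i=1}^h t_i + \frac{\prod_{i=1}^h t_i}{(h-1)!} - h$. Assume additionally $s - h - 1 \le h - 1$. Set $R = r + s$. Then $\frac{\left(\prod_{i=1}^h t_i\right) \prod_{j=h+1}^{s-1} (r+j)}{\left(\prod_{i=1}^h (R - t_i)\right) \prod_{j=h+1}^{s-1} (R - r - j)} < 1$. -/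
/-!
Write `R = r + s`, `S = ∑ tᵢ`, `P = ∏ tᵢ`, `m = h - 1` and `n = s - h - 1`, so that `n ≤ m`.
The numerator is at most `P R^n`, the second product of the denominator is `n!`, and the
Weierstrass product inequality gives `∏ (R - tᵢ) ≥ R^m (R - S)`. The hypothesis on `r` says
`P < (r + h - S) m! ≤ (R - S) m!`, and `m! ≤ n! R^(m-n)`, hence
`P R^n < (R - S) m! R^n ≤ n! R^m (R - S) ≤ n! ∏ (R - tᵢ)`.
-/

open Finset Nat

theorem Nat.factorial_le_factorial_mul_pow_sub {R : Type*} [CommSemiring R] [PartialOrder R]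
    [IsOrderedRing R] {m n : ℕ} (h : n ≤ m) {x : R} (hx : (m : R) ≤ x) :
    (m ! : R) ≤ n ! * x ^ (m - n) := by
  have hnat : m ! ≤ n ! * m ^ (m - n) := by
    rw [← factorial_mul_descFactorial (sub_le m n), Nat.sub_sub_self h]
    exact Nat.mul_le_mul_left _ (descFactorial_le_pow m _)
  calc (m ! : R) ≤ n ! * (m : R) ^ (m - n) := by exact_mod_cast Nat.mono_cast (α := R) hnat
    _ ≤ n ! * x ^ (m - n) := by gcongr

theorem Finset.prod_Ico_sub_eq_factorial (a b : ℕ) : ∏ j ∈ Ico a b, (b - j) = (b - a)! := by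
  rcases le_or_gt a b with hab | hba
  · have h := prod_Ico_reflect id a b.le_succ
    rw [Nat.add_sub_cancel_left, Nat.sub_add_comm hab] at h
    rw [← prod_Ico_id_eq_factorial]
    exact h
  · simp [hba.le]

theorem Finset.prod_Ico_natCast_sub_eq_factorial {R : Type*} [CommRing R] (a b : ℕ) :
    ∏ j ∈ Ico a b, ((b : R) - j) = (b - a)! := by
  rw [← prod_Ico_sub_eq_factorial, Nat.cast_prod]
  refine prod_congr rfl fun j hj => ?_
  rw [Nat.cast_sub (mem_Ico.mp hj).2.le]

theorem Finset.prod_Ico_add_natCast_le_pow {R : Type*} [CommSemiring R] [PartialOrder R]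
    [IsOrderedRing R] {x : R} (hx : 0 ≤ x) (a b : ℕ) :
    ∏ j ∈ Ico a b, (x + j) ≤ (x + b) ^ (b - a) := by
  calc ∏ j ∈ Ico a b, (x + j) ≤ ∏ j ∈ Ico a b, (x + b) :=
        prod_le_prod (fun j _ => by positivity) fun j hj => by
          gcongr; exact_mod_cast (mem_Ico.mp hj).2.le
    _ = (x + b) ^ (b - a) := by rw [prod_const, Nat.card_Ico]

theorem pow_card_mul_sub_sum_le_mul_prod_sub_s6 {ι R : Type*} [CommRing R] [LinearOrder R]
    [IsStrictOrderedRing R] (A : Finset ι) (f : ι → R) (x : R) (hf : ∀ i ∈ A, 0 ≤ f i)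
    (hx : ∑ i ∈ A, f i ≤ x) : x ^ #A * (x - ∑ i ∈ A, f i) ≤ x * ∏ i ∈ A, (x - f i) := by
  induction A using Finset.cons_induction with
  | empty => simp
  | cons a A ha ih =>
    rw [sum_cons] at hx ⊢
    rw [prod_cons, card_cons]
    have hfa : 0 ≤ f a := hf a (mem_cons_self a A)
    have hfA : ∀ i ∈ A, 0 ≤ f i := fun i hi => hf i (mem_cons_of_mem hi)
    have hσ : 0 ≤ ∑ i ∈ A, f i := sum_nonneg hfA
    have hx0 : 0 ≤ x := by linarith
    calc x ^ (#A + 1) * (x - (f a + ∑ i ∈ A, f i))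
        ≤ x ^ #A * ((x - f a) * (x - ∑ i ∈ A, f i)) := by
          rw [pow_succ, mul_assoc]
          exact mul_le_mul_of_nonneg_left (by nlinarith [mul_nonneg hfa hσ]) (pow_nonneg hx0 _)
      _ = (x - f a) * (x ^ #A * (x - ∑ i ∈ A, f i)) := by ring
      _ ≤ (x - f a) * (x * ∏ i ∈ A, (x - f i)) := by
          exact mul_le_mul_of_nonneg_left (ih hfA (by linarith)) (by linarith)
      _ = x * ((x - f a) * ∏ i ∈ A, (x - f i)) := by ring

theorem pow_card_sub_one_mul_sub_sum_le_prod_sub {ι R : Type*} [CommRing R] [LinearOrder R]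
    [IsStrictOrderedRing R] {A : Finset ι} (hA : A.Nonempty) (f : ι → R) {x : R} (hx0 : 0 < x)
    (hf : ∀ i ∈ A, 0 ≤ f i) (hx : ∑ i ∈ A, f i ≤ x) :
    x ^ (#A - 1) * (x - ∑ i ∈ A, f i) ≤ ∏ i ∈ A, (x - f i) := by
  refine le_of_mul_le_mul_left ?_ hx0
  rw [← mul_assoc, mul_pow_sub_one hA.card_pos.ne']
  exact pow_card_mul_sub_sum_le_mul_prod_sub_s6 A f x hf hx

theorem stmt_6_general (h : ℕ) (hh : 1 ≤ h) (t : ℕ → ℕ)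
    (htpos : ∀ i ∈ Finset.Icc 1 h, 0 < t i)
    (s : ℕ) (hs : h < s) (hsh : (s : ℤ) - h - 1 ≤ (h : ℤ) - 1)
    (r : ℤ)
    (hr : (r : ℚ) > (∑ i ∈ Finset.Icc 1 h, (t i : ℚ)) +
        (∏ i ∈ Finset.Icc 1 h, (t i : ℚ)) / (h - 1).factorial - h) :
    ((∏ i ∈ Finset.Icc 1 h, (t i : ℚ)) *
        ∏ j ∈ Finset.Icc (h + 1) (s - 1), ((r : ℚ) + j)) /
      ((∏ i ∈ Finset.Icc 1 h, (((r : ℚ) + s) - t i)) *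
        ∏ j ∈ Finset.Icc (h + 1) (s - 1), (((r : ℚ) + s) - (r : ℚ) - j)) < 1 := by
  rw [Icc_sub_one_right_eq_Ico_of_not_isMin (by simp; omega)]
  set S : ℚ := ∑ i ∈ Icc 1 h, (t i : ℚ)
  set P : ℚ := ∏ i ∈ Icc 1 h, (t i : ℚ)
  set R : ℚ := r + s
  set m := h - 1
  set n := s - (h + 1)
  have hnm : n ≤ m := by omega
  have hhs : (h : ℚ) < s := by exact_mod_cast hs
  have hms : (m : ℚ) ≤ s := by exact_mod_cast (by omega : m ≤ s)
  have hS : (h : ℚ) ≤ S := by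
    have := card_nsmul_le_sum _ (fun i => (t i : ℚ)) 1 fun i hi => by exact_mod_cast htpos i hi
    rwa [Nat.card_Icc, Nat.add_sub_cancel, nsmul_one] at this
  have hPm : 0 ≤ P / m ! := by positivity
  have hr0 : (0 : ℚ) < r := by linarith
  have hPS : P < (R - S) * m ! :=
    calc P < (r + h - S) * m ! := (div_lt_iff₀ (by positivity)).mp (by linarith)
      _ ≤ (R - S) * m ! := by gcongr; linarith
  have hRS : 0 < R - S := by linarith
  have hD1 : R ^ m * (R - S) ≤ ∏ i ∈ Icc 1 h, (R - t i) := by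
    simpa using pow_card_sub_one_mul_sub_sum_le_prod_sub (nonempty_Icc.mpr hh)
      (fun i => (t i : ℚ)) (by linarith) (fun i _ => by positivity) (by linarith)
  have hD2 : ∏ j ∈ Ico (h + 1) s, (R - r - j) = n ! := by
    simpa only [R, add_sub_cancel_left] using prod_Ico_natCast_sub_eq_factorial (R := ℚ) _ _
  have hN : ∏ j ∈ Ico (h + 1) s, ((r : ℚ) + j) ≤ R ^ n := prod_Ico_add_natCast_le_pow hr0.le _ _
  have hfact : (m ! : ℚ) ≤ n ! * R ^ (m - n) := factorial_le_factorial_mul_pow_sub hnm (by linarith)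
  have hD1pos : 0 < ∏ i ∈ Icc 1 h, (R - t i) := lt_of_lt_of_le (by positivity) hD1
  rw [div_lt_one (by rw [hD2]; positivity), hD2]
  calc P * ∏ j ∈ Ico (h + 1) s, ((r : ℚ) + j) ≤ P * R ^ n := by gcongr
    _ < (R - S) * m ! * R ^ n := by gcongr
    _ ≤ (R - S) * (n ! * R ^ (m - n)) * R ^ n := by gcongr
    _ = n ! * (R ^ m * (R - S)) := by rw [← pow_sub_mul_pow R hnm]; ring
    _ ≤ (∏ i ∈ Icc 1 h, (R - t i)) * n ! := by rw [mul_comm]; gcongr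

theorem stmt_6 (h : ℕ) (hh : 1 ≤ h) (t : ℕ → ℕ)
    (htpos : ∀ i ∈ Finset.Icc 1 h, 0 < t i)
    (htmono : ∀ i ∈ Finset.Icc 1 (h - 1), t i < t (i + 1))
    (s : ℕ) (hs : h < s) (hsh : (s : ℤ) - h - 1 ≤ (h : ℤ) - 1)
    (r : ℤ) (htr : (t h : ℤ) < r + h + 1)
    (hr : (r : ℚ) > (∑ i ∈ Finset.Icc 1 h, (t i : ℚ)) +
        (∏ i ∈ Finset.Icc 1 h, (t i : ℚ)) / (h - 1).factorial - h) :
    ((∏ i ∈ Finset.Icc 1 h, (t i : ℚ)) *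
        ∏ j ∈ Finset.Icc (h + 1) (s - 1), ((r : ℚ) + j)) /
      ((∏ i ∈ Finset.Icc 1 h, (((r : ℚ) + s) - t i)) *
        ∏ j ∈ Finset.Icc (h + 1) (s - 1), (((r : ℚ) + s) - (r : ℚ) - j)) < 1 :=
  stmt_6_general h hh t htpos s hs hsh r hr
end
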